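/- arXiv:2508.02964 — 3 statements merged into one kernel-verified Lean document; each statement's English description precedes it below -/
import Mathlib

section
/- Tweedie's formula: Let p be a probability density on ℝⁿ with finite first moment, let α > 0 and σ > 0, and define the smoothed density p_t(x) = ∫_{ℝⁿ} φ_σ(x − α u) p(u) du. Then for every x ∈ ℝⁿ with p_t(x) > 0, p_t is differentiable at x and the posterior mean satisfies (1/p_t(x)) ∫_{ℝⁿ} u · φ_σ(x − α u) p(u) du = (1/α) ( x + σ² ∇_x log p_t(x) ). -/
open MeasureTheory Real

/-- Density of the isotropic Gaussian `N(0, σ²I)` on `ℝⁿ`: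
`φ_σ(v) = (2πσ²)^(−n/2) exp(−‖v‖²/(2σ²))`. -/
noncomputable def gaussPdf (n : ℕ) (σ : ℝ) (v : EuclideanSpace ℝ (Fin n)) : ℝ :=
  (2 * π * σ ^ 2) ^ (-(n : ℝ) / 2) * Real.exp (-‖v‖ ^ 2 / (2 * σ ^ 2))

theorem gauss_nonneg (n : ℕ) (σ : ℝ) (v : EuclideanSpace ℝ (Fin n)) : 0 ≤ gaussPdf n σ v := by
  unfold gaussPdf
  have : (0:ℝ) ≤ 2 * π * σ ^ 2 := by positivity
  positivity

theorem gauss_le (n : ℕ) (σ : ℝ) (hσ : 0 < σ) (v : EuclideanSpace ℝ (Fin n)) :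
    gaussPdf n σ v ≤ (2 * π * σ ^ 2) ^ (-(n : ℝ) / 2) := by
  unfold gaussPdf
  have hC : (0:ℝ) ≤ (2 * π * σ ^ 2) ^ (-(n : ℝ) / 2) := by
    have : (0:ℝ) ≤ 2 * π * σ ^ 2 := by positivity
    positivity
  have : Real.exp (-‖v‖ ^ 2 / (2 * σ ^ 2)) ≤ 1 := by
    rw [Real.exp_le_one_iff]
    have h1 : (0:ℝ) < 2 * σ ^ 2 := by positivity
    have h2 : (0:ℝ) ≤ ‖v‖ ^ 2 := by positivity
    exact div_nonpos_of_nonpos_of_nonneg (neg_nonpos.mpr h2) h1.le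
  nlinarith

theorem gauss_norm_le (n : ℕ) (σ : ℝ) (hσ : 0 < σ) (v : EuclideanSpace ℝ (Fin n)) :
    ‖v‖ * gaussPdf n σ v ≤ σ * (2 * π * σ ^ 2) ^ (-(n : ℝ) / 2) := by
  unfold gaussPdf
  have hC : (0:ℝ) ≤ (2 * π * σ ^ 2) ^ (-(n : ℝ) / 2) := by
    have : (0:ℝ) ≤ 2 * π * σ ^ 2 := by positivity
    positivity
  have key : ‖v‖ * Real.exp (-‖v‖ ^ 2 / (2 * σ ^ 2)) ≤ σ := by
    set t := ‖v‖ with ht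
    have ht0 : 0 ≤ t := norm_nonneg v
    have hs : (0:ℝ) < 2 * σ ^ 2 := by positivity
    have hexp : t ^ 2 / (2 * σ ^ 2) + 1 ≤ Real.exp (t ^ 2 / (2 * σ ^ 2)) :=
      Real.add_one_le_exp _
    have hle : t ≤ σ * Real.exp (t ^ 2 / (2 * σ ^ 2)) := by
      have h1 : σ * (t ^ 2 / (2 * σ ^ 2) + 1) ≤ σ * Real.exp (t ^ 2 / (2 * σ ^ 2)) := by
        exact mul_le_mul_of_nonneg_left hexp hσ.le
      have h2 : t ≤ σ * (t ^ 2 / (2 * σ ^ 2) + 1) := by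
        rw [mul_add, mul_one]
        have : σ * (t ^ 2 / (2 * σ ^ 2)) = t ^ 2 / (2 * σ) := by
          field_simp
        rw [this]
        rw [div_add' _ _ _ (by positivity : (2:ℝ) * σ ≠ 0), le_div_iff₀ (by positivity)]
        nlinarith [sq_nonneg (t - σ)]
      linarith
    have hepos : (0:ℝ) < Real.exp (t ^ 2 / (2 * σ ^ 2)) := Real.exp_pos _
    rw [neg_div, Real.exp_neg]
    calc t * (Real.exp (t ^ 2 / (2 * σ ^ 2)))⁻¹ ≤
        (σ * Real.exp (t ^ 2 / (2 * σ ^ 2))) * (Real.exp (t ^ 2 / (2 * σ ^ 2)))⁻¹ := by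
          apply mul_le_mul_of_nonneg_right hle (by positivity)
      _ = σ := by field_simp
  calc ‖v‖ * ((2 * π * σ ^ 2) ^ (-(n : ℝ) / 2) * Real.exp (-‖v‖ ^ 2 / (2 * σ ^ 2)))
      = (‖v‖ * Real.exp (-‖v‖ ^ 2 / (2 * σ ^ 2))) * (2 * π * σ ^ 2) ^ (-(n : ℝ) / 2) := by ring
    _ ≤ σ * (2 * π * σ ^ 2) ^ (-(n : ℝ) / 2) := mul_le_mul_of_nonneg_right key hC

theorem gauss_hasFDerivAt (n : ℕ) (σ : ℝ) (hσ : 0 < σ) (v : EuclideanSpace ℝ (Fin n)) :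
    HasFDerivAt (gaussPdf n σ) ((-(σ^2)⁻¹ * gaussPdf n σ v) • innerSL ℝ v) v := by
  have hσ2 : σ ^ 2 ≠ 0 := by positivity
  have h1 : HasFDerivAt (fun w : EuclideanSpace ℝ (Fin n) => ‖w‖^2) (2 • innerSL ℝ v) v :=
    (hasStrictFDerivAt_norm_sq v).hasFDerivAt
  have h4 := ((h1.const_mul (-(2*σ^2)⁻¹)).exp).const_mul ((2 * π * σ ^ 2) ^ (-(n : ℝ) / 2))
  have hfun : (gaussPdf n σ) = fun w => (2 * π * σ ^ 2) ^ (-(n : ℝ) / 2) *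
      Real.exp (-(2*σ^2)⁻¹ * ‖w‖^2) := by
    funext w
    unfold gaussPdf
    congr 2
    field_simp
  have hd : (-(σ^2)⁻¹ * gaussPdf n σ v) • innerSL ℝ v =
      (2 * π * σ ^ 2) ^ (-(n : ℝ) / 2) •
        Real.exp (-(2*σ^2)⁻¹ * ‖v‖^2) • (-(2*σ^2)⁻¹ • (2 • innerSL ℝ v)) := by
    rw [hfun]
    ext y
    simp only [ContinuousLinearMap.coe_smul', Pi.smul_apply, smul_eq_mul, two_smul,
      ContinuousLinearMap.add_apply]
    ring
  rw [hd, hfun]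
  exact h4

/-- **Tweedie's formula.** If `p` is a probability density on `ℝⁿ` with finite first
moment, `α, σ > 0`, and `p_t(x) = ∫ φ_σ(x − α u) p(u) du`, then at every `x` with
`p_t(x) > 0`, `p_t` is differentiable and the posterior mean satisfies
`(1/p_t(x)) ∫ u φ_σ(x − α u) p(u) du = (1/α)(x + σ² ∇ log p_t(x))`. -/
theorem tweedies_formula (n : ℕ) (p : EuclideanSpace ℝ (Fin n) → ℝ)
    (hp_nonneg : ∀ u, 0 ≤ p u)
    (hp_prob : ∫ u, p u = 1)
    (hp_moment : Integrable (fun u => ‖u‖ * p u))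
    (α σ : ℝ) (hα : 0 < α) (hσ : 0 < σ)
    (pt : EuclideanSpace ℝ (Fin n) → ℝ)
    (hpt : ∀ x, pt x = ∫ u, gaussPdf n σ (x - α • u) * p u)
    (x : EuclideanSpace ℝ (Fin n)) (hx : 0 < pt x) :
    DifferentiableAt ℝ pt x ∧
      (pt x)⁻¹ • (∫ u, (gaussPdf n σ (x - α • u) * p u) • u) =
        α⁻¹ • (x + σ ^ 2 • gradient (fun z => Real.log (pt z)) x) := by
  have hσ2 : (σ:ℝ)^2 ≠ 0 := by positivity
  set C := (2 * π * σ ^ 2) ^ (-(n : ℝ) / 2) with hCdef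
  have hC0 : (0:ℝ) ≤ C := by
    have : (0:ℝ) ≤ 2 * π * σ ^ 2 := by positivity
    rw [hCdef]; positivity
  have hp_int : Integrable p := by
    by_contra h
    rw [integral_undef h] at hp_prob
    exact one_ne_zero hp_prob.symm
  have hg_cont : Continuous (gaussPdf n σ) := by
    unfold gaussPdf
    exact continuous_const.mul (((continuous_norm.pow 2).neg.div_const _).rexp)
  have haff : ∀ y : EuclideanSpace ℝ (Fin n),
      Continuous (fun u : EuclideanSpace ℝ (Fin n) => y - α • u) :=
    fun y => continuous_const.sub (continuous_id.const_smul α)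
  have hFmeas : ∀ y, AEStronglyMeasurable (fun u => gaussPdf n σ (y - α • u) * p u) volume :=
    fun y => ((hg_cont.comp (haff y)).aestronglyMeasurable).mul hp_int.aestronglyMeasurable
  have hFint : ∀ y, Integrable (fun u => gaussPdf n σ (y - α • u) * p u) := by
    intro y
    refine (hp_int.const_mul C).mono' (hFmeas y) ?_
    filter_upwards with u
    rw [Real.norm_eq_abs, abs_of_nonneg (mul_nonneg (gauss_nonneg _ _ _) (hp_nonneg u))]
    exact mul_le_mul_of_nonneg_right (gauss_le n σ hσ _) (hp_nonneg u)
  set F' : EuclideanSpace ℝ (Fin n) → EuclideanSpace ℝ (Fin n) →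
      (EuclideanSpace ℝ (Fin n) →L[ℝ] ℝ) :=
    fun y u => ((-(σ^2)⁻¹ * gaussPdf n σ (y - α • u)) * p u) • innerSL ℝ (y - α • u) with hF'def
  have hnorm_aux : ∀ y u : EuclideanSpace ℝ (Fin n),
      |(-(σ^2)⁻¹ * gaussPdf n σ (y - α • u) * p u)| * ‖y - α • u‖ ≤ (σ⁻¹ * C) * p u := by
    intro y u
    rw [abs_mul, abs_mul, abs_of_nonneg (hp_nonneg u),
      abs_of_nonneg (gauss_nonneg _ _ _), abs_neg, abs_of_nonneg (by positivity : (0:ℝ) ≤ (σ^2)⁻¹)]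
    have key := gauss_norm_le n σ hσ (y - α • u)
    have hre : (σ^2)⁻¹ * gaussPdf n σ (y - α • u) * p u * ‖y - α • u‖
        = (σ^2)⁻¹ * p u * (‖y - α • u‖ * gaussPdf n σ (y - α • u)) := by ring
    rw [hre]
    have hpu := hp_nonneg u
    calc (σ^2)⁻¹ * p u * (‖y - α • u‖ * gaussPdf n σ (y - α • u))
        ≤ (σ^2)⁻¹ * p u * (σ * C) := by
          apply mul_le_mul_of_nonneg_left key (by positivity)
      _ = σ⁻¹ * C * p u := by field_simp
  have hF'norm : ∀ y u, ‖F' y u‖ ≤ (σ⁻¹ * C) * p u := by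
    intro y u
    simp only [hF'def]
    refine le_trans (ContinuousLinearMap.opNorm_smul_le _ _) ?_
    rw [Real.norm_eq_abs, innerSL_apply_norm]
    exact hnorm_aux y u
  have hFderiv : ∀ y u, HasFDerivAt (fun z => gaussPdf n σ (z - α • u) * p u) (F' y u) y := by
    intro y u
    have h1 : HasFDerivAt (fun z : EuclideanSpace ℝ (Fin n) => z - α • u)
        (ContinuousLinearMap.id ℝ _) y := (hasFDerivAt_id y).sub_const (α • u)
    have h2 := ((gauss_hasFDerivAt n σ hσ (y - α • u)).comp y h1).mul_const (p u)
    simp only [ContinuousLinearMap.comp_id] at h2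
    have heq : F' y u = p u • ((-(σ^2)⁻¹ * gaussPdf n σ (y - α • u)) • innerSL ℝ (y - α • u)) := by
      rw [hF'def, smul_smul, mul_comm]
    rw [heq]
    exact h2
  have hF'meas : AEStronglyMeasurable (F' x) volume := by
    rw [hF'def]
    apply AEStronglyMeasurable.smul (f := fun u => -(σ ^ 2)⁻¹ * gaussPdf n σ (x - α • u) * p u)
      (g := fun u => innerSL ℝ (x - α • u))
    · exact (((hg_cont.comp (haff x)).aestronglyMeasurable).const_mul _).mul
        hp_int.aestronglyMeasurable
    · exact ((innerSL ℝ).continuous.comp (haff x)).aestronglyMeasurable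
  have hkey : HasFDerivAt (fun y => ∫ u, gaussPdf n σ (y - α • u) * p u)
      (∫ u, F' x u) x := by
    apply hasFDerivAt_integral_of_dominated_of_fderiv_le (Metric.ball_mem_nhds x zero_lt_one)
      (Filter.Eventually.of_forall fun y => hFmeas y) (hFint x) hF'meas
      (Filter.Eventually.of_forall fun u => fun y _ => hF'norm y u)
      ((hp_int.const_mul (σ⁻¹ * C)))
      (Filter.Eventually.of_forall fun u => fun y _ => hFderiv y u)
  have hpt' : pt = fun y => ∫ u, gaussPdf n σ (y - α • u) * p u := funext hpt
  have hkey' : HasFDerivAt pt (∫ u, F' x u) x := by rw [hpt']; exact hkey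
  set G : EuclideanSpace ℝ (Fin n) → EuclideanSpace ℝ (Fin n) :=
    fun u => ((-(σ^2)⁻¹ * gaussPdf n σ (x - α • u)) * p u) • (x - α • u) with hGdef
  have hGmeas : AEStronglyMeasurable G volume := by
    rw [hGdef]
    exact AEStronglyMeasurable.smul
      ((((hg_cont.comp (haff x)).aestronglyMeasurable).const_mul _).mul
        hp_int.aestronglyMeasurable) (haff x).aestronglyMeasurable
  have hGint : Integrable G := by
    refine (hp_int.const_mul (σ⁻¹ * C)).mono' hGmeas ?_
    filter_upwards with u
    rw [hGdef]
    rw [norm_smul, Real.norm_eq_abs]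
    exact hnorm_aux x u
  have hF'xint : Integrable (F' x) :=
    (hp_int.const_mul (σ⁻¹ * C)).mono' hF'meas
      (Filter.Eventually.of_forall fun u => hF'norm x u)
  have hI1 : Integrable (fun u => (gaussPdf n σ (x - α • u) * p u) • u) := by
    refine (hp_moment.const_mul C).mono' ((hFmeas x).smul aestronglyMeasurable_id) ?_
    filter_upwards with u
    rw [norm_smul, Real.norm_eq_abs,
      abs_of_nonneg (mul_nonneg (gauss_nonneg _ _ _) (hp_nonneg u))]
    calc gaussPdf n σ (x - α • u) * p u * ‖u‖ ≤ C * p u * ‖u‖ := by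
          apply mul_le_mul_of_nonneg_right
            (mul_le_mul_of_nonneg_right (gauss_le n σ hσ _) (hp_nonneg u)) (norm_nonneg u)
      _ = C * (‖u‖ * p u) := by ring
  have hFeq : (∫ u, F' x u) = (InnerProductSpace.toDual ℝ _) (∫ u, G u) := by
    apply ContinuousLinearMap.ext
    intro y
    rw [ContinuousLinearMap.integral_apply hF'xint, InnerProductSpace.toDual_apply_apply,
      real_inner_comm, ← integral_inner hGint]
    refine integral_congr_ae (Filter.Eventually.of_forall fun u => ?_)
    simp only [hF'def, hGdef]
    rw [ContinuousLinearMap.smul_apply, innerSL_apply_apply, real_inner_smul_right,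
      smul_eq_mul, real_inner_comm]
  have hGrad : HasGradientAt pt (∫ u, G u) x := by
    rw [hasGradientAt_iff_hasFDerivAt, ← hFeq]
    exact hkey'
  have hlog : HasGradientAt (fun z => Real.log (pt z)) ((pt x)⁻¹ • ∫ u, G u) x := by
    rw [hasGradientAt_iff_hasFDerivAt]
    have h := (Real.hasDerivAt_log hx.ne').comp_hasFDerivAt x hkey'
    have heq : (InnerProductSpace.toDual ℝ _) ((pt x)⁻¹ • ∫ u, G u)
        = (pt x)⁻¹ • (∫ u, F' x u) := by
      rw [hFeq]
      ext y
      rw [ContinuousLinearMap.smul_apply, InnerProductSpace.toDual_apply_apply,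
        InnerProductSpace.toDual_apply_apply, real_inner_smul_left, smul_eq_mul]
    rw [heq]
    exact h
  have hgrad_eq : gradient (fun z => Real.log (pt z)) x = (pt x)⁻¹ • ∫ u, G u :=
    hlog.gradient
  have hGval : (∫ u, G u) = (σ^2)⁻¹ • (α • ∫ u, (gaussPdf n σ (x - α • u) * p u) • u)
      - (σ^2)⁻¹ • ((pt x) • x) := by
    have step1 : (∫ u, G u) = ∫ u,
        ((σ^2)⁻¹ • (α • ((gaussPdf n σ (x - α • u) * p u) • u))
          - (σ^2)⁻¹ • ((gaussPdf n σ (x - α • u) * p u) • x)) := by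
      refine integral_congr_ae (Filter.Eventually.of_forall fun u => ?_)
      rw [hGdef]
      module
    have int1 : Integrable
        (fun u => (σ^2)⁻¹ • (α • ((gaussPdf n σ (x - α • u) * p u) • u))) volume := by
      exact (hI1.smul α).smul ((σ^2)⁻¹ : ℝ)
    have int2 : Integrable
        (fun u => (σ^2)⁻¹ • ((gaussPdf n σ (x - α • u) * p u) • x)) volume := by
      exact ((hFint x).smul_const x).smul ((σ^2)⁻¹ : ℝ)
    rw [step1, integral_sub int1 int2,
      integral_smul, integral_smul, integral_smul, integral_smul_const, ← hpt x]
  refine ⟨hkey'.differentiableAt, ?_⟩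
  rw [hgrad_eq, hGval]
  have hptne : pt x ≠ 0 := hx.ne'
  match_scalars
  · field_simp
  · field_simp
    ring
end

section
/- Necessary condition for exact recovery by Tweedie's formula: Fix x₀ ∈ ℝⁿ, let α_t ∈ (0,1) and σ_t² = 1 − α_t, and let p_t : ℝⁿ → (0, ∞) be a differentiable probability density such that for every x ∈ ℝⁿ, (1/√α_t) ( x + σ_t² ∇_x log p_t(x) ) = x₀. Then p_t(x) = φ_{σ_t}(x − √α_t x₀) for every x ∈ ℝⁿ, i.e. p_t is the isotropic Gaussian density with mean √α_t x₀ and covariance σ_t² I. -/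
open MeasureTheory Real

/-- **Necessary condition for exact recovery by Tweedie's formula.**
Fix `x₀ ∈ ℝⁿ`, `α_t ∈ (0,1)`, `σ_t² = 1 − α_t`, `σ_t > 0`, and let `p_t` be a
differentiable, everywhere-positive probability density such that
`(1/√α_t)(x + σ_t² ∇ₓ log p_t(x)) = x₀` for every `x`. Then
`p_t(x) = φ_{σ_t}(x − √α_t x₀)` for every `x`. -/
theorem gaussian_of_tweedie_exact (n : ℕ) (x₀ : EuclideanSpace ℝ (Fin n))
    (αt : ℝ) (hαt : αt ∈ Set.Ioo (0 : ℝ) 1)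
    (σt : ℝ) (hσt : σt ^ 2 = 1 - αt) (hσt_pos : 0 < σt)
    (pt : EuclideanSpace ℝ (Fin n) → ℝ)
    (hpt_pos : ∀ x, 0 < pt x)
    (hpt_diff : Differentiable ℝ pt)
    (hpt_prob : ∫ x, pt x = 1)
    (htweedie : ∀ x, (Real.sqrt αt)⁻¹ •
        (x + σt ^ 2 • gradient (fun z => Real.log (pt z)) x) = x₀) :
    ∀ x, pt x = gaussPdf n σt (x - Real.sqrt αt • x₀) := by
  have hσ2 : (0 : ℝ) < σt ^ 2 := by positivity
  have hα : 0 < Real.sqrt αt := Real.sqrt_pos.mpr hαt.1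
  set m : EuclideanSpace ℝ (Fin n) := Real.sqrt αt • x₀ with hm
  -- gradient of log pt
  have hlogdiff : Differentiable ℝ (fun z => Real.log (pt z)) := fun x =>
    (Real.differentiableAt_log (hpt_pos x).ne').comp x (hpt_diff x)
  have hgrad : ∀ x, gradient (fun z => Real.log (pt z)) x = (σt ^ 2)⁻¹ • (m - x) := by
    intro x
    have h1 := htweedie x
    have h2 : x + σt ^ 2 • gradient (fun z => Real.log (pt z)) x = m := by
      have := congrArg (fun v => Real.sqrt αt • v) h1
      simpa [smul_inv_smul₀ hα.ne'] using this
    have h3 : σt ^ 2 • gradient (fun z => Real.log (pt z)) x = m - x := by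
      rw [← h2]; abel
    calc gradient (fun z => Real.log (pt z)) x
        = (σt ^ 2)⁻¹ • (σt ^ 2 • gradient (fun z => Real.log (pt z)) x) := by
          rw [inv_smul_smul₀ hσ2.ne']
      _ = (σt ^ 2)⁻¹ • (m - x) := by rw [h3]
  -- define F and show it has zero derivative
  set F : EuclideanSpace ℝ (Fin n) → ℝ :=
    fun x => Real.log (pt x) + (2 * σt ^ 2)⁻¹ * ‖x - m‖ ^ 2 with hF
  have hFderiv : ∀ x, HasFDerivAt F (0 : EuclideanSpace ℝ (Fin n) →L[ℝ] ℝ) x := by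
    intro x
    have hd1 : HasFDerivAt (fun z => Real.log (pt z))
        ((InnerProductSpace.toDual ℝ _) ((σt ^ 2)⁻¹ • (m - x))) x := by
      have := (hlogdiff x).hasGradientAt
      rw [hgrad x] at this
      exact this.hasFDerivAt
    have hd2 : HasFDerivAt (fun z : EuclideanSpace ℝ (Fin n) => ‖z - m‖ ^ 2)
        (2 • (innerSL ℝ (x - m)).comp (ContinuousLinearMap.id ℝ _)) x := by
      have : HasFDerivAt (fun z : EuclideanSpace ℝ (Fin n) => z - m)
          (ContinuousLinearMap.id ℝ _) x := (hasFDerivAt_id x).sub_const m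
      exact this.norm_sq
    have hd3 := hd1.add (hd2.const_mul ((2 * σt ^ 2)⁻¹))
    refine (show HasFDerivAt F _ x from hd3).congr_fderiv ?_
    ext y
    simp only [ContinuousLinearMap.zero_apply, ContinuousLinearMap.add_apply,
      ContinuousLinearMap.smul_apply, InnerProductSpace.toDual_apply_apply,
      ContinuousLinearMap.coe_comp', Function.comp_apply,
      ContinuousLinearMap.coe_id', id_eq, ContinuousLinearMap.coe_smul',
      Pi.smul_apply, innerSL_apply_apply, smul_eq_mul]
    rw [real_inner_smul_left]
    have : (inner ℝ (m - x) y : ℝ) = - inner ℝ (x - m) y := by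
      rw [← inner_neg_left]; congr 1; abel
    rw [this]
    have hne : (2 : ℝ) * σt ^ 2 ≠ 0 := by positivity
    field_simp
    ring
  -- F is constant
  have hFconst : ∀ x, F x = F m := fun x =>
    is_const_of_fderiv_eq_zero (fun y => (hFderiv y).differentiableAt)
      (fun y => (hFderiv y).fderiv) x m
  have hCval : F m = Real.log (pt m) := by simp [hF]
  -- explicit formula for pt
  have hpt_eq : ∀ x, pt x = pt m * Real.exp (-(2 * σt ^ 2)⁻¹ * ‖x - m‖ ^ 2) := by
    intro x
    have h := hFconst x
    rw [hCval, hF] at h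
    have : Real.log (pt x) = Real.log (pt m) + (-(2 * σt ^ 2)⁻¹ * ‖x - m‖ ^ 2) := by
      simp only at h; linarith
    calc pt x = Real.exp (Real.log (pt x)) := (Real.exp_log (hpt_pos x)).symm
      _ = Real.exp (Real.log (pt m)) * Real.exp (-(2 * σt ^ 2)⁻¹ * ‖x - m‖ ^ 2) := by
          rw [this, Real.exp_add]
      _ = pt m * Real.exp (-(2 * σt ^ 2)⁻¹ * ‖x - m‖ ^ 2) := by
          rw [Real.exp_log (hpt_pos m)]
  -- compute the integral
  have hb : (0 : ℝ) < (2 * σt ^ 2)⁻¹ := by positivity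
  have hint : ∫ x : EuclideanSpace ℝ (Fin n),
      Real.exp (-(2 * σt ^ 2)⁻¹ * ‖x - m‖ ^ 2) = (2 * π * σt ^ 2) ^ ((n : ℝ) / 2) := by
    rw [show ∫ x : EuclideanSpace ℝ (Fin n), Real.exp (-(2 * σt ^ 2)⁻¹ * ‖x - m‖ ^ 2)
        = ∫ x : EuclideanSpace ℝ (Fin n), Real.exp (-(2 * σt ^ 2)⁻¹ * ‖x‖ ^ 2) from
      integral_sub_right_eq_self (μ := volume)
        (fun x : EuclideanSpace ℝ (Fin n) => Real.exp (-(2 * σt ^ 2)⁻¹ * ‖x‖ ^ 2)) m]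
    rw [GaussianFourier.integral_rexp_neg_mul_sq_norm hb]
    rw [finrank_euclideanSpace_fin]
    congr 1
    field_simp
  have hptm : pt m = (2 * π * σt ^ 2) ^ (-(n : ℝ) / 2) := by
    have h1 : ∫ x : EuclideanSpace ℝ (Fin n), pt x
        = pt m * (2 * π * σt ^ 2) ^ ((n : ℝ) / 2) := by
      rw [show (fun x : EuclideanSpace ℝ (Fin n) => pt x) = fun x =>
          pt m * Real.exp (-(2 * σt ^ 2)⁻¹ * ‖x - m‖ ^ 2) from funext hpt_eq]
      rw [integral_const_mul, hint]
    rw [hpt_prob] at h1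
    have hpow : (0 : ℝ) < (2 * π * σt ^ 2) ^ ((n : ℝ) / 2) :=
      Real.rpow_pos_of_pos (by positivity) _
    have : pt m = ((2 * π * σt ^ 2) ^ ((n : ℝ) / 2))⁻¹ := by
      field_simp at h1 ⊢
      linarith
    rw [this, ← Real.rpow_neg (by positivity)]
    ring_nf
  intro x
  rw [hpt_eq x, hptm, gaussPdf, hm]
  congr 2
  ring
end

section
/- Theorem 4 (sufficiency decomposition for compositions of a surjection with a linear map): Let φ : ℝⁿ → ℝʳ be surjective, let B : ℝʳ → ℝᵏ be a linear map, and set 𝒜 = B ∘ φ. Let y ∈ ℝᵏ and let z* ∈ ℝⁿ be a global minimizer of z ↦ ‖y − B(φ(z))‖₂². Then φ(z*) is a global minimizer of α ↦ ‖y − B α‖₂² over ℝʳ, and for every x₀ ∈ ℝⁿ, ‖y − B(φ(x₀))‖₂² = ‖y − B(φ(z*))‖₂² + ‖B(φ(z*)) − B(φ(x₀))‖₂². Consequently the Gaussian likelihood (2πσ_y²)^{−k/2} exp(−‖y − 𝒜(x₀)‖₂² / (2σ_y²)) factorizes as g(z*, x₀) · h(y) with g(z*, x₀) = (2πσ_y²)^{−k/2}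 exp(−‖𝒜(z*) − 𝒜(x₀)‖₂² / (2σ_y²)) and h(y) = exp(−‖y − 𝒜(z*)‖₂² / (2σ_y²)), for any σ_y > 0. -/
open Real

lemma aux_inner_zero {E : Type*} [NormedAddCommGroup E] [InnerProductSpace ℝ E]
    (u w : E) (h : ∀ t : ℝ, ‖u‖ ^ 2 ≤ ‖u - t • w‖ ^ 2) :
    (inner ℝ u w : ℝ) = 0 := by
  set c : ℝ := inner ℝ u w with hc
  have hexp : ∀ t : ℝ, ‖u - t • w‖ ^ 2 = ‖u‖ ^ 2 - 2 * t * c + t ^ 2 * ‖w‖ ^ 2 := by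
    intro t
    rw [norm_sub_sq_real, norm_smul, real_inner_smul_right]
    simp [mul_pow]
    ring
  have h1 := h (c / (‖w‖ ^ 2 + 1))
  rw [hexp] at h1
  have hw : (0:ℝ) ≤ ‖w‖ ^ 2 := sq_nonneg _
  have hpos : (0:ℝ) < ‖w‖ ^ 2 + 1 := by linarith
  have h2 : 2 * (c / (‖w‖ ^ 2 + 1)) * c ≤ (c / (‖w‖ ^ 2 + 1)) ^ 2 * ‖w‖ ^ 2 := by
    linarith
  have hne : (‖w‖ ^ 2 + 1) ≠ 0 := ne_of_gt hpos
  have ht : c / (‖w‖ ^ 2 + 1) * (‖w‖ ^ 2 + 1) = c := div_mul_cancel₀ c hne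
  have hcc : 2 * (c / (‖w‖ ^ 2 + 1)) * c
      = 2 * (c / (‖w‖ ^ 2 + 1)) ^ 2 * (‖w‖ ^ 2 + 1) := by
    field_simp
  have hsq : (c / (‖w‖ ^ 2 + 1)) ^ 2 ≤ 0 := by
    nlinarith [mul_nonneg (sq_nonneg (c / (‖w‖ ^ 2 + 1))) hw]
  have h0 : c / (‖w‖ ^ 2 + 1) = 0 :=
    sq_eq_zero_iff.mp (le_antisymm hsq (sq_nonneg _))
  rw [← ht, h0, zero_mul]

/-- **Theorem 4 (sufficiency decomposition for compositions of a surjection with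
a linear map).** Let `φ : ℝⁿ → ℝʳ` be surjective, `B : ℝʳ → ℝᵏ` linear, and
`𝒜 = B ∘ φ`. Let `y ∈ ℝᵏ` and let `z*` be a global minimizer of
`z ↦ ‖y − B(φ(z))‖₂²`. Then `φ(z*)` is a global minimizer of `α ↦ ‖y − B α‖₂²`;
for every `x₀`, `‖y − B(φ(x₀))‖² = ‖y − B(φ(z*))‖² + ‖B(φ(z*)) − B(φ(x₀))‖²`;
and for every `σ_y > 0` the Gaussian likelihood factorizes as
`(2πσ_y²)^(−k/2) exp(−‖𝒜 z* − 𝒜 x₀‖²/(2σ_y²)) · exp(−‖y − 𝒜 z*‖²/(2σ_y²))`. -/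
theorem sufficiency_surjective_linear_composition (n r k : ℕ)
    (φ : EuclideanSpace ℝ (Fin n) → EuclideanSpace ℝ (Fin r))
    (hφ : Function.Surjective φ)
    (B : EuclideanSpace ℝ (Fin r) →L[ℝ] EuclideanSpace ℝ (Fin k))
    (y : EuclideanSpace ℝ (Fin k)) (zstar : EuclideanSpace ℝ (Fin n))
    (hmin : ∀ z, ‖y - B (φ zstar)‖ ^ 2 ≤ ‖y - B (φ z)‖ ^ 2) :
    (∀ a : EuclideanSpace ℝ (Fin r), ‖y - B (φ zstar)‖ ^ 2 ≤ ‖y - B a‖ ^ 2) ∧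
    (∀ x₀ : EuclideanSpace ℝ (Fin n),
      ‖y - B (φ x₀)‖ ^ 2 = ‖y - B (φ zstar)‖ ^ 2 + ‖B (φ zstar) - B (φ x₀)‖ ^ 2) ∧
    (∀ σy : ℝ, 0 < σy → ∀ x₀ : EuclideanSpace ℝ (Fin n),
      (2 * π * σy ^ 2) ^ (-(k : ℝ) / 2) *
          Real.exp (-‖y - B (φ x₀)‖ ^ 2 / (2 * σy ^ 2)) =
        ((2 * π * σy ^ 2) ^ (-(k : ℝ) / 2) *
            Real.exp (-‖B (φ zstar) - B (φ x₀)‖ ^ 2 / (2 * σy ^ 2))) *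
          Real.exp (-‖y - B (φ zstar)‖ ^ 2 / (2 * σy ^ 2))) := by
  -- orthogonality
  have horth : ∀ a : EuclideanSpace ℝ (Fin r),
      (inner ℝ (y - B (φ zstar)) (B a - B (φ zstar)) : ℝ) = 0 := by
    intro a
    apply aux_inner_zero
    intro t
    obtain ⟨z, hz⟩ := hφ (φ zstar + t • (a - φ zstar))
    have := hmin z
    rw [hz] at this
    have heq : y - B (φ zstar) - t • (B a - B (φ zstar))
        = y - B (φ zstar + t • (a - φ zstar)) := by
      simp [map_add, map_smul, map_sub, smul_sub]
      abel
    rw [heq]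
    exact this
  have hpyth : ∀ a : EuclideanSpace ℝ (Fin r),
      ‖y - B a‖ ^ 2 = ‖y - B (φ zstar)‖ ^ 2 + ‖B (φ zstar) - B a‖ ^ 2 := by
    intro a
    have h1 : y - B a = (y - B (φ zstar)) - (B a - B (φ zstar)) := by abel
    rw [h1, norm_sub_sq_real, horth a, norm_sub_rev (B (φ zstar))]
    ring
  refine ⟨fun a => by rw [hpyth a]; nlinarith [sq_nonneg ‖B (φ zstar) - B a‖],
    fun x₀ => hpyth (φ x₀), fun σy hσ x₀ => ?_⟩
  rw [hpyth (φ x₀)]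
  have hsplit : -(‖y - B (φ zstar)‖ ^ 2 + ‖B (φ zstar) - B (φ x₀)‖ ^ 2) / (2 * σy ^ 2)
      = -‖B (φ zstar) - B (φ x₀)‖ ^ 2 / (2 * σy ^ 2)
        + -‖y - B (φ zstar)‖ ^ 2 / (2 * σy ^ 2) := by ring
  rw [hsplit, Real.exp_add]; ring
end
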